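/- arXiv:2009.01201 — 4 statements merged into one kernel-verified Lean document; each statement's English description precedes it below -/
import Mathlib

section
/- If there exists a pair (λ̄, μ̄) ∈ H₁ × H₂ such that λ̄ + A*μ̄ = 0 and σ_B(λ̄) + σ_C(μ̄) < 0, then the problem of minimizing ½⟨z, Qz⟩ + ⟨q, z⟩ over z ∈ B subject to Az ∈ C is strongly infeasible; that is, 0 does not belong to the closure of the set {(b − z, c − Az) : b ∈ B, c ∈ C, z ∈ H₁} ⊆ H₁ × H₂. -/
open scoped InnerProductSpace Pointwise Classical
open Filter Topology

noncomputable section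

variable {H₁ H₂ : Type*} [NormedAddCommGroup H₁] [InnerProductSpace ℝ H₁]
  [NormedAddCommGroup H₂] [InnerProductSpace ℝ H₂]

/-- The effective domain of an extended-real-valued function. -/
def fdom {α : Type*} (f : α → EReal) : Set α := {x | f x ≠ ⊤}

/-- The indicator function of a set (0 on the set, `+∞` outside). -/
def indE {α : Type*} (s : Set α) (x : α) : EReal := if x ∈ s then 0 else ⊤

/-- The support function `σ_S(u) = sup_{x ∈ S} ⟪x, u⟫`. -/
def suppF {H : Type*} [NormedAddCommGroup H] [InnerProductSpace ℝ H]
    (s : Set H) (u : H) : EReal :=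
  ⨆ x ∈ s, ((⟪x, u⟫_ℝ : ℝ) : EReal)

/-- The polar cone `S° = {u | ∀ x ∈ S, ⟪x, u⟫ ≤ 0}`. -/
def polarCone {H : Type*} [NormedAddCommGroup H] [InnerProductSpace ℝ H]
    (s : Set H) : Set H := {u | ∀ x ∈ s, ⟪x, u⟫_ℝ ≤ 0}

/-- The recession cone `rec S = {x | ∀ y ∈ S, x + y ∈ S}`. -/
def recCone {H : Type*} [AddCommGroup H] (s : Set H) : Set H :=
  {x | ∀ y ∈ s, x + y ∈ s}

/-- `p` is the metric projection of `x` onto `S`, i.e. `p = P_S x`. -/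
def IsProjOn {H : Type*} [NormedAddCommGroup H] [InnerProductSpace ℝ H]
    (S : Set H) (x p : H) : Prop := p ∈ S ∧ ∀ w ∈ S, dist x p ≤ dist x w

/-- The Fenchel conjugate on the Hilbert product `H₁ × H₂` (with the ℓ²
inner product `⟪(z,y),(λ,μ)⟫ = ⟪z,λ⟫ + ⟪y,μ⟫`). -/
def pConj (f : H₁ × H₂ → EReal) : H₁ × H₂ → EReal :=
  fun u => ⨆ p : H₁ × H₂, ((⟪p.1, u.1⟫_ℝ + ⟪p.2, u.2⟫_ℝ : ℝ) : EReal) - f p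

/-- `f(z, y) = ι_B(z) + ι_C(y)`. -/
def qpF (B : Set H₁) (C : Set H₂) : H₁ × H₂ → EReal :=
  fun p => indE B p.1 + indE C p.2

/-- `g(z, y) = ½⟪z, Qz⟫ + ⟪q, z⟫ + ι_{Az = y}(z, y)`. -/
def qpG (Q : H₁ →L[ℝ] H₁) (q : H₁) (A : H₁ →L[ℝ] H₂) : H₁ × H₂ → EReal :=
  fun p => ((1 / 2 * ⟪p.1, Q p.1⟫_ℝ + ⟪q, p.1⟫_ℝ : ℝ) : EReal) +
    indE {r : H₁ × H₂ | A r.1 = r.2} p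

/-- `v` is the element of minimum norm of `S ⊆ H₁ × H₂` with respect to the
Hilbert (ℓ²) product norm, i.e. `v = P_S 0`. -/
def IsMinNormPointP (S : Set (H₁ × H₂)) (v : H₁ × H₂) : Prop :=
  v ∈ S ∧ ∀ w ∈ S, ‖v.1‖ ^ 2 + ‖v.2‖ ^ 2 ≤ ‖w.1‖ ^ 2 + ‖w.2‖ ^ 2

/-! The linear functional `(x, y) ↦ ⟪x, λ̄⟫ + ⟪y, μ̄⟫` vanishes on `{(z, Az)}` because
`λ̄ = -A*μ̄`, so on each point `(b - z, c - Az)` it equals `⟪b, λ̄⟫ + ⟪c, μ̄⟫ ≤ σ_B(λ̄) + σ_C(μ̄)`.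
This bound passes to the closure, but at the origin the functional is `0 > σ_B(λ̄) + σ_C(μ̄)`. -/

theorem coe_inner_le_suppF {H : Type*} [NormedAddCommGroup H] [InnerProductSpace ℝ H]
    {s : Set H} {x : H} (hx : x ∈ s) (u : H) : ((⟪x, u⟫_ℝ : ℝ) : EReal) ≤ suppF s u :=
  le_iSup₂ (f := fun x (_ : x ∈ s) => ((⟪x, u⟫_ℝ : ℝ) : EReal)) x hx

theorem inner_add_inner_apply_eq_zero [CompleteSpace H₁] [CompleteSpace H₂]
    {A : H₁ →L[ℝ] H₂} {lam : H₁} {mu : H₂}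
    (hlm : lam + (ContinuousLinearMap.adjoint A) mu = 0) (z : H₁) :
    ⟪z, lam⟫_ℝ + ⟪A z, mu⟫_ℝ = 0 := by
  rw [← ContinuousLinearMap.adjoint_inner_right, ← inner_add_right, hlm, inner_zero_right]

theorem coe_inner_sub_add_inner_sub_le_suppF_add [CompleteSpace H₁] [CompleteSpace H₂]
    {A : H₁ →L[ℝ] H₂} {B : Set H₁} {C : Set H₂} {lam : H₁} {mu : H₂}
    (hlm : lam + (ContinuousLinearMap.adjoint A) mu = 0)
    {b : H₁} (hb : b ∈ B) {c : H₂} (hc : c ∈ C) (z : H₁) :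
    ((⟪b - z, lam⟫_ℝ + ⟪c - A z, mu⟫_ℝ : ℝ) : EReal) ≤ suppF B lam + suppF C mu := by
  have hz := inner_add_inner_apply_eq_zero hlm z
  have hshift : ⟪b - z, lam⟫_ℝ + ⟪c - A z, mu⟫_ℝ = ⟪b, lam⟫_ℝ + ⟪c, mu⟫_ℝ := by
    rw [inner_sub_left, inner_sub_left]; linarith
  rw [hshift, EReal.coe_add]
  exact add_le_add (coe_inner_le_suppF hb lam) (coe_inner_le_suppF hc mu)

theorem isClosed_setOf_coe_le {X : Type*} [TopologicalSpace X] {f : X → ℝ}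
    (hf : Continuous f) (s : EReal) : IsClosed {x | (f x : EReal) ≤ s} :=
  isClosed_le (continuous_coe_real_ereal.comp hf) continuous_const

theorem primal_strong_infeasibility_certificate_general {H₁ H₂ : Type*}
    [NormedAddCommGroup H₁] [InnerProductSpace ℝ H₁] [FiniteDimensional ℝ H₁]
    [NormedAddCommGroup H₂] [InnerProductSpace ℝ H₂] [FiniteDimensional ℝ H₂]
    (A : H₁ →L[ℝ] H₂) (B : Set H₁) (C : Set H₂)
    (lam : H₁) (mu : H₂)
    (hlm : lam + (ContinuousLinearMap.adjoint A) mu = 0)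
    (hneg : suppF B lam + suppF C mu < 0)
    : (0 : H₁ × H₂) ∉
      closure {p : H₁ × H₂ | ∃ b ∈ B, ∃ c ∈ C, ∃ z : H₁, p = (b - z, c - A z)} := by
  set φ : H₁ × H₂ → ℝ := fun p => ⟪p.1, lam⟫_ℝ + ⟪p.2, mu⟫_ℝ
  have hφ : Continuous φ := by fun_prop
  have hbound : {p : H₁ × H₂ | ∃ b ∈ B, ∃ c ∈ C, ∃ z : H₁, p = (b - z, c - A z)} ⊆
      {p | (φ p : EReal) ≤ suppF B lam + suppF C mu} := by
    rintro _ ⟨b, hb, c, hc, z, rfl⟩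
    exact coe_inner_sub_add_inner_sub_le_suppF_add hlm hb hc z
  intro h0
  have h0le : ((φ 0 : ℝ) : EReal) ≤ suppF B lam + suppF C mu :=
    closure_minimal hbound (isClosed_setOf_coe_le hφ _) h0
  simp only [φ, Prod.fst_zero, Prod.snd_zero, inner_zero_left, add_zero, EReal.coe_zero] at h0le
  exact h0le.not_gt hneg

theorem primal_strong_infeasibility_certificate {H₁ H₂ : Type*}
    [NormedAddCommGroup H₁] [InnerProductSpace ℝ H₁] [FiniteDimensional ℝ H₁]
    [NormedAddCommGroup H₂] [InnerProductSpace ℝ H₂] [FiniteDimensional ℝ H₂]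
    (Q : H₁ →L[ℝ] H₁) (hQsa : IsSelfAdjoint Q) (hQpos : ∀ z : H₁, 0 ≤ ⟪Q z, z⟫_ℝ)
    (q : H₁) (A : H₁ →L[ℝ] H₂)
    (B : Set H₁) (hBne : B.Nonempty) (hBcl : IsClosed B) (hBcv : Convex ℝ B)
    (C : Set H₂) (hCne : C.Nonempty) (hCcl : IsClosed C) (hCcv : Convex ℝ C)
    (lam : H₁) (mu : H₂)
    (hlm : lam + (ContinuousLinearMap.adjoint A) mu = 0)
    (hneg : suppF B lam + suppF C mu < 0)
    : (0 : H₁ × H₂) ∉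
      closure {p : H₁ × H₂ | ∃ b ∈ B, ∃ c ∈ C, ∃ z : H₁, p = (b - z, c - A z)} :=
  primal_strong_infeasibility_certificate_general A B C lam mu hlm hneg

end
end

section
/- If there exists z̄ ∈ rec B such that Q z̄ = 0, A z̄ ∈ rec C, and ⟨q, z̄⟩ < 0, then the Fenchel dual of the problem of minimizing ½⟨z, Qz⟩ + ⟨q, z⟩ over z ∈ B subject to Az ∈ C is strongly infeasible; that is, 0 does not belong to cl(dom f* + dom g*) ⊆ H₁ × H₂, where f(z,y) = ι_B(z) + ι_C(y) and g(z,y) = ½⟨z, Qz⟩ + ⟨q, z⟩ + ι_{{(z,y) : Az = y}}(z,y) on H₁ × H₂, and f*, g* are their Fenchel conjugates. -/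
open scoped InnerProductSpace Pointwise Classical
open Filter Topology

noncomputable section

variable {H₁ H₂ : Type*} [NormedAddCommGroup H₁] [InnerProductSpace ℝ H₁]
  [NormedAddCommGroup H₂] [InnerProductSpace ℝ H₂]

/-! The functional `φ (λ, μ) = ⟪z̄, λ⟫ + ⟪A z̄, μ⟫` separates `0` from `dom f* + dom g*`.
Along the recession rays `(b + n z̄, c + n A z̄)` of `B × C` the supremum defining `f* u` grows
like `n φ u`, so `φ ≤ 0` on `dom f*`; along the ray `n (z̄, A z̄)` of the graph of `A`, where the
quadratic term vanishes, it grows like `n (φ v - ⟪q, z̄⟫)`, so `φ ≤ ⟪q, z̄⟫` on `dom g*`. The sum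
therefore lies in the closed half-space `φ ≤ ⟪q, z̄⟫ < 0`, which misses `0`. -/

lemma nonpos_of_forall_nat_mul_add_le {a c : ℝ} {S : EReal} (hS : S ≠ ⊤)
    (h : ∀ n : ℕ, ((n * c + a : ℝ) : EReal) ≤ S) : c ≤ 0 := by
  lift S to ℝ using ⟨hS, ne_bot_of_le_ne_bot (EReal.coe_ne_bot _) (h 0)⟩
  by_contra! hc
  obtain ⟨n, hn⟩ := exists_nat_gt ((S - a) / c)
  rw [div_lt_iff₀ hc] at hn
  linarith [EReal.coe_le_coe_iff.1 (h n)]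

lemma nsmul_add_mem_of_mem_recCone {H : Type*} [AddCommGroup H] {s : Set H} {z : H}
    (hz : z ∈ recCone s) (n : ℕ) {y : H} (hy : y ∈ s) : n • z + y ∈ s := by
  induction n with
  | zero => simpa using hy
  | succ n ih => simpa [succ_nsmul', add_assoc] using hz _ ih

lemma inner_add_inner_le_pConj_qpF {B : Set H₁} {C : Set H₂} {b : H₁} {c : H₂}
    (hb : b ∈ B) (hc : c ∈ C) (u : H₁ × H₂) :
    ((⟪b, u.1⟫_ℝ + ⟪c, u.2⟫_ℝ : ℝ) : EReal) ≤ pConj (qpF B C) u :=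
  le_iSup_of_le (b, c) (by simp [qpF, indE, hb, hc])

lemma inner_sub_le_pConj_qpG (Q : H₁ →L[ℝ] H₁) (q : H₁) (A : H₁ →L[ℝ] H₂) (z : H₁)
    (u : H₁ × H₂) :
    ((⟪z, u.1⟫_ℝ + ⟪A z, u.2⟫_ℝ - (1 / 2 * ⟪z, Q z⟫_ℝ + ⟪q, z⟫_ℝ) : ℝ) : EReal) ≤
      pConj (qpG Q q A) u :=
  le_iSup_of_le (z, A z) (by simp [qpG, indE])

lemma inner_recCone_le_zero_of_mem_fdom_pConj_qpF {B : Set H₁} {C : Set H₂}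
    (hB : B.Nonempty) (hC : C.Nonempty) {z : H₁} {w : H₂} (hz : z ∈ recCone B)
    (hw : w ∈ recCone C) {u : H₁ × H₂} (hu : u ∈ fdom (pConj (qpF B C))) :
    ⟪z, u.1⟫_ℝ + ⟪w, u.2⟫_ℝ ≤ 0 := by
  obtain ⟨b, hb⟩ := hB
  obtain ⟨c, hc⟩ := hC
  refine nonpos_of_forall_nat_mul_add_le (a := ⟪b, u.1⟫_ℝ + ⟪c, u.2⟫_ℝ) hu fun n => ?_
  convert inner_add_inner_le_pConj_qpF (nsmul_add_mem_of_mem_recCone hz n hb)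
    (nsmul_add_mem_of_mem_recCone hw n hc) u using 2
  simp only [← Nat.cast_smul_eq_nsmul ℝ, inner_add_left, real_inner_smul_left]
  ring

lemma inner_le_of_mem_fdom_pConj_qpG (Q : H₁ →L[ℝ] H₁) (q : H₁) (A : H₁ →L[ℝ] H₂) {z : H₁}
    (hz : ⟪z, Q z⟫_ℝ = 0) {u : H₁ × H₂} (hu : u ∈ fdom (pConj (qpG Q q A))) :
    ⟪z, u.1⟫_ℝ + ⟪A z, u.2⟫_ℝ ≤ ⟪q, z⟫_ℝ := by
  suffices ⟪z, u.1⟫_ℝ + ⟪A z, u.2⟫_ℝ - ⟪q, z⟫_ℝ ≤ 0 by linarith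
  refine nonpos_of_forall_nat_mul_add_le (a := 0) hu fun n => ?_
  convert inner_sub_le_pConj_qpG Q q A ((n : ℝ) • z) u using 2
  simp only [map_smul, real_inner_smul_left, real_inner_smul_right, hz]
  ring

theorem dual_strong_infeasibility_certificate_general {H₁ H₂ : Type*}
    [NormedAddCommGroup H₁] [InnerProductSpace ℝ H₁]
    [NormedAddCommGroup H₂] [InnerProductSpace ℝ H₂]
    (Q : H₁ →L[ℝ] H₁)
    (q : H₁) (A : H₁ →L[ℝ] H₂)
    (B : Set H₁) (hBne : B.Nonempty)
    (C : Set H₂) (hCne : C.Nonempty)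
    (zbar : H₁) (hzB : zbar ∈ recCone B) (hQz : Q zbar = 0)
    (hAz : A zbar ∈ recCone C) (hqz : ⟪q, zbar⟫_ℝ < 0)
    : (0 : H₁ × H₂) ∉ closure (fdom (pConj (qpF B C)) + fdom (pConj (qpG Q q A))) := by
  set K : Set (H₁ × H₂) := {s | ⟪zbar, s.1⟫_ℝ + ⟪A zbar, s.2⟫_ℝ ≤ ⟪q, zbar⟫_ℝ}
  have hK : IsClosed K := isClosed_le (by fun_prop) continuous_const
  have hdom : fdom (pConj (qpF B C)) + fdom (pConj (qpG Q q A)) ⊆ K := by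
    refine Set.add_subset_iff.2 fun u hu v hv => ?_
    have hf := inner_recCone_le_zero_of_mem_fdom_pConj_qpF hBne hCne hzB hAz hu
    have hg := inner_le_of_mem_fdom_pConj_qpG Q q A (z := zbar) (by simp [hQz]) hv
    simp only [K, Set.mem_ofPred_eq, Prod.fst_add, Prod.snd_add, inner_add_right]
    linarith
  intro h0
  exact hqz.not_ge (by simpa [K] using closure_minimal hdom hK h0)

theorem dual_strong_infeasibility_certificate {H₁ H₂ : Type*}
    [NormedAddCommGroup H₁] [InnerProductSpace ℝ H₁] [FiniteDimensional ℝ H₁]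
    [NormedAddCommGroup H₂] [InnerProductSpace ℝ H₂] [FiniteDimensional ℝ H₂]
    (Q : H₁ →L[ℝ] H₁) (hQsa : IsSelfAdjoint Q) (hQpos : ∀ z : H₁, 0 ≤ ⟪Q z, z⟫_ℝ)
    (q : H₁) (A : H₁ →L[ℝ] H₂)
    (B : Set H₁) (hBne : B.Nonempty) (hBcl : IsClosed B) (hBcv : Convex ℝ B)
    (C : Set H₂) (hCne : C.Nonempty) (hCcl : IsClosed C) (hCcv : Convex ℝ C)
    (zbar : H₁) (hzB : zbar ∈ recCone B) (hQz : Q zbar = 0)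
    (hAz : A zbar ∈ recCone C) (hqz : ⟪q, zbar⟫_ℝ < 0)
    : (0 : H₁ × H₂) ∉ closure (fdom (pConj (qpF B C)) + fdom (pConj (qpG Q q A))) :=
  dual_strong_infeasibility_certificate_general Q q A B hBne C hCne zbar hzB hQz hAz hqz

end
end

section
/- Writing v_D = (v_D', v_D'') and v_P = (v_P', v_P'') and v = v_P + v_D = (v', v''), the following componentwise projection formulas hold: -v_D' = P_{rec B}(-v'), -v_D'' = P_{rec C}(-v''), -v_P' = P_{(rec B)°}(-v'), and -v_P'' = P_{(rec C)°}(-v''). -/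
open scoped InnerProductSpace Pointwise Classical
open Filter Topology

noncomputable section

variable {H₁ H₂ : Type*} [NormedAddCommGroup H₁] [InnerProductSpace ℝ H₁]
  [NormedAddCommGroup H₂] [InnerProductSpace ℝ H₂]

/-!
Both `S_P = dom f - dom g` and `S_D = dom f* + dom g*` are convex, and the minimal-norm point
`v` of `cl S` satisfies `⟪v, d⟫ ≥ 0` for every recession direction `d` of `S`. Recession
directions of `S_P` are `rec B × {0}`, `{0} × rec C` and the graph of `A`; those of `S_D` are
`bar B × {0}`, `{0} × bar C` (barrier cones) and `{(-A* μ, μ)}`. Hence `-v_P' ∈ (rec B)°`,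
`-v_D' ∈ (bar B)° ⊆ rec B` (Hahn–Banach), and `v_D'' = A v_D'`, so `v_D` is on the graph and
`⟪v_P, v_D⟫ ≥ 0`. Both componentwise products `⟪v_P', v_D'⟫`, `⟪v_P'', v_D''⟫` are `≤ 0`, hence
zero, and Moreau's criterion (`a ∈ K`, `b ∈ K°`, `a ⟂ b` give `a = P_K (a + b)` and
`b = P_{K°} (a + b)`) yields the four formulas.
-/

theorem EReal.ne_top_iff_exists_le_coe {x : EReal} : x ≠ ⊤ ↔ ∃ M : ℝ, x ≤ M := by
  induction x with
  | bot => simp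
  | coe r => simpa using ⟨r, le_rfl⟩
  | top => simp

section RecessionCone

variable {E F : Type*} [AddCommGroup E] [AddCommGroup F]

theorem zero_mem_recCone (s : Set E) : (0 : E) ∈ recCone s := fun y hy => by
  rwa [zero_add]

theorem prod_mem_recCone {s : Set E} {t : Set F} {x : E} {y : F} (hx : x ∈ recCone s)
    (hy : y ∈ recCone t) : (x, y) ∈ recCone (s ×ˢ t) :=
  fun p hp => ⟨hx p.1 hp.1, hy p.2 hp.2⟩

theorem recCone_subset_recCone_sub (s t : Set E) : recCone s ⊆ recCone (s - t) := by
  rintro x hx _ ⟨a, ha, b, hb, rfl⟩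
  exact ⟨x + a, hx a ha, b, hb, add_sub_assoc x a b⟩

theorem recCone_subset_recCone_add_left (s t : Set E) : recCone s ⊆ recCone (s + t) := by
  rintro x hx _ ⟨a, ha, b, hb, rfl⟩
  exact ⟨x + a, hx a ha, b, hb, add_assoc x a b⟩

theorem recCone_subset_recCone_add_right (s t : Set E) : recCone t ⊆ recCone (s + t) := by
  rintro x hx _ ⟨a, ha, b, hb, rfl⟩
  exact ⟨a, ha, x + b, hx b hb, add_left_comm a x b⟩

theorem Submodule.coe_subset_recCone_sub {R : Type*} [Ring R] [Module R E]
    (p : Submodule R E) (s : Set E) : (p : Set E) ⊆ recCone (s - p) := by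
  rintro x hx _ ⟨a, ha, b, hb, rfl⟩
  exact ⟨a, ha, b - x, p.sub_mem hb hx, by beta_reduce; abel⟩

theorem recCone_subset_recCone_closure [TopologicalSpace E] [ContinuousAdd E] (s : Set E) :
    recCone s ⊆ recCone (closure s) := fun x hx =>
  Set.MapsTo.closure (f := (x + ·)) hx (continuous_const_add x)

end RecessionCone

theorem nonneg_of_forall_mem_Ioc_nonneg_add_mul {a b : ℝ}
    (h : ∀ t ∈ Set.Ioc (0 : ℝ) 1, 0 ≤ a + t * b) : 0 ≤ a := by
  have hlim : Tendsto (fun t : ℝ => a + t * b) (𝓝[>] 0) (𝓝 a) :=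
    tendsto_nhdsWithin_of_tendsto_nhds
      ((by fun_prop : Continuous fun t : ℝ => a + t * b).tendsto' 0 a (by simp))
  refine ge_of_tendsto hlim ?_
  filter_upwards [Ioc_mem_nhdsGT one_pos] with t ht using h t ht

theorem IsMinNormPointP.inner_nonneg_of_mem_recCone {S : Set (H₁ × H₂)} (hS : Convex ℝ S)
    {v : H₁ × H₂} (hv : IsMinNormPointP (closure S) v) {d : H₁ × H₂} (hd : d ∈ recCone S) :
    0 ≤ ⟪v.1, d.1⟫_ℝ + ⟪v.2, d.2⟫_ℝ := by
  have hvd : v + d ∈ closure S := by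
    rw [add_comm]; exact recCone_subset_recCone_closure S hd v hv.1
  suffices 0 ≤ 2 * (⟪v.1, d.1⟫_ℝ + ⟪v.2, d.2⟫_ℝ) by linarith
  refine nonneg_of_forall_mem_Ioc_nonneg_add_mul (b := ‖d.1‖ ^ 2 + ‖d.2‖ ^ 2)
    fun t ⟨ht0, ht1⟩ => (mul_nonneg_iff_of_pos_left ht0).1 ?_
  have hmin := hv.2 _ (hS.closure.add_smul_mem hv.1 hvd ⟨ht0.le, ht1⟩)
  simp only [Prod.fst_add, Prod.snd_add, Prod.smul_fst, Prod.smul_snd, norm_add_sq_real,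
    real_inner_smul_right, norm_smul, Real.norm_eq_abs, abs_of_pos ht0, mul_pow] at hmin
  nlinarith

theorem mem_fdom_pConj_iff {f : H₁ × H₂ → EReal} {u : H₁ × H₂} :
    u ∈ fdom (pConj f) ↔
      ∃ M : ℝ, ∀ p, ((⟪p.1, u.1⟫_ℝ + ⟪p.2, u.2⟫_ℝ : ℝ) : EReal) ≤ M + f p := by
  simp only [fdom, Set.mem_ofPred_eq, EReal.ne_top_iff_exists_le_coe, pConj, iSup_le_iff]
  refine exists_congr fun M => forall_congr' fun p => ?_
  exact EReal.sub_le_iff_le_add (.inr (EReal.coe_ne_top M)) (.inr (EReal.coe_ne_bot M))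

theorem convex_fdom_pConj (f : H₁ × H₂ → EReal) : Convex ℝ (fdom (pConj f)) := by
  intro u hu u' hu' a b ha hb hab
  obtain ⟨M, hM⟩ := mem_fdom_pConj_iff.1 hu
  obtain ⟨M', hM'⟩ := mem_fdom_pConj_iff.1 hu'
  refine mem_fdom_pConj_iff.2 ⟨a * M + b * M', fun p => ?_⟩
  have h := hM p
  have h' := hM' p
  generalize f p = r at h h' ⊢
  induction r with
  | bot => simp at h
  | top => rw [EReal.coe_add_top]; exact le_top
  | coe r =>
    norm_cast at h h' ⊢
    simp only [Prod.fst_add, Prod.snd_add, Prod.smul_fst, Prod.smul_snd, inner_add_right,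
      real_inner_smul_right]
    have hr : r = a * r + b * r := by rw [← add_mul, hab, one_mul]
    nlinarith [mul_le_mul_of_nonneg_left h ha, mul_le_mul_of_nonneg_left h' hb]

theorem mem_recCone_fdom_pConj {f : H₁ × H₂ → EReal} {d : H₁ × H₂} {M : ℝ}
    (hd : ∀ p ∈ fdom f, ⟪p.1, d.1⟫_ℝ + ⟪p.2, d.2⟫_ℝ ≤ M) : d ∈ recCone (fdom (pConj f)) := by
  intro u hu
  obtain ⟨N, hN⟩ := mem_fdom_pConj_iff.1 hu
  refine mem_fdom_pConj_iff.2 ⟨M + N, fun p => ?_⟩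
  by_cases hp : p ∈ fdom f
  · have h := hN p
    have hpd := hd p hp
    have hp' : f p ≠ ⊤ := hp
    generalize f p = r at h hp' ⊢
    induction r with
    | bot => simp at h
    | top => exact absurd rfl hp'
    | coe r =>
      norm_cast at h ⊢
      simp only [Prod.fst_add, Prod.snd_add, inner_add_right]
      linarith
  · rw [fdom, Set.mem_ofPred_eq, not_not] at hp
    simp [hp]

def barrierCone {H : Type*} [NormedAddCommGroup H] [InnerProductSpace ℝ H] (s : Set H) :
    Set H :=
  {y | ∃ M : ℝ, ∀ x ∈ s, ⟪x, y⟫_ℝ ≤ M}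

theorem polarCone_barrierCone_subset_recCone {H : Type*} [NormedAddCommGroup H]
    [InnerProductSpace ℝ H] [CompleteSpace H] {s : Set H} (hs : IsClosed s) (hsc : Convex ℝ s) :
    polarCone (barrierCone s) ⊆ recCone s := by
  intro x hx b hb
  by_contra hxb
  obtain ⟨φ, c, hφs, hφx⟩ := geometric_hahn_banach_closed_point hsc hs hxb
  set y := (InnerProductSpace.toDual ℝ H).symm φ
  have hy : ∀ z, ⟪z, y⟫_ℝ = φ z := fun z => by
    rw [real_inner_comm, InnerProductSpace.toDual_symm_apply]
  have hxy : φ x ≤ 0 := by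
    rw [← hy, real_inner_comm]
    exact hx y ⟨c, fun z hz => (hy z).symm ▸ (hφs z hz).le⟩
  linarith [map_add φ x b, hφs b hb]

theorem isProjOn_of_inner_le {H : Type*} [NormedAddCommGroup H] [InnerProductSpace ℝ H]
    {S : Set H} {x p : H} (hp : p ∈ S) (h : ∀ w ∈ S, ⟪x - p, w - p⟫_ℝ ≤ 0) :
    IsProjOn S x p := by
  refine ⟨hp, fun w hw => ?_⟩
  have hsq : ‖x - w‖ ^ 2 = ‖x - p‖ ^ 2 - 2 * ⟪x - p, w - p⟫_ℝ + ‖w - p‖ ^ 2 := by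
    rw [← norm_sub_sq_real, sub_sub_sub_cancel_right]
  rw [dist_eq_norm, dist_eq_norm]
  nlinarith [h w hw, norm_nonneg (x - p), norm_nonneg (x - w), sq_nonneg ‖w - p‖]

theorem isProjOn_add_of_mem_polarCone {H : Type*} [NormedAddCommGroup H]
    [InnerProductSpace ℝ H] {K : Set H} {a b : H} (ha : a ∈ K) (hb : b ∈ polarCone K)
    (hab : ⟪a, b⟫_ℝ = 0) : IsProjOn K (a + b) a ∧ IsProjOn (polarCone K) (a + b) b := by
  refine ⟨isProjOn_of_inner_le ha fun w hw => ?_, isProjOn_of_inner_le hb fun w hw => ?_⟩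
  · rw [add_sub_cancel_left, inner_sub_right, real_inner_comm w, real_inner_comm a, hab]
    linarith [hb w hw]
  · rw [add_sub_cancel_right, inner_sub_right, hab]
    linarith [hw a ha]

theorem eq_apply_of_forall_inner_adjoint_nonneg [CompleteSpace H₁] [CompleteSpace H₂]
    {A : H₁ →L[ℝ] H₂} {x : H₁} {y : H₂}
    (h : ∀ μ, 0 ≤ ⟪x, -(ContinuousLinearMap.adjoint A μ)⟫_ℝ + ⟪y, μ⟫_ℝ) :
    y = A x := by
  have hsq : ⟪A x - y, A x - y⟫_ℝ ≤ 0 := by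
    have := h (A x - y)
    rw [inner_neg_right, ContinuousLinearMap.adjoint_inner_right] at this
    rw [inner_sub_left]
    linarith
  exact (sub_eq_zero.1 (real_inner_self_nonpos.1 hsq)).symm

section QuadraticProgram

variable {Q : H₁ →L[ℝ] H₁} {q : H₁} {A : H₁ →L[ℝ] H₂} {B : Set H₁} {C : Set H₂}

theorem fdom_qpF {α β : Type*} (B : Set α) (C : Set β) : fdom (qpF B C) = B ×ˢ C := by
  ext p
  by_cases h1 : p.1 ∈ B <;> by_cases h2 : p.2 ∈ C <;> simp [fdom, qpF, indE, h1, h2]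

theorem fdom_qpG (Q : H₁ →L[ℝ] H₁) (q : H₁) (A : H₁ →L[ℝ] H₂) :
    fdom (qpG Q q A) = ((A : H₁ →ₗ[ℝ] H₂).graph : Set (H₁ × H₂)) := by
  ext p
  simp only [fdom, qpG, indE, Set.mem_ofPred_eq, SetLike.mem_coe, LinearMap.mem_graph_iff,
    ContinuousLinearMap.coe_coe, eq_comm (a := p.2)]
  split_ifs with h
  · exact iff_of_true (by rw [add_zero]; exact EReal.coe_ne_top _) h
  · exact iff_of_false (by rw [EReal.coe_add_top]; exact not_not_intro rfl) h

theorem convex_fdom_qpF_sub_fdom_qpG (hB : Convex ℝ B) (hC : Convex ℝ C) :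
    Convex ℝ (fdom (qpF B C) - fdom (qpG Q q A)) := by
  rw [fdom_qpF, fdom_qpG]
  exact (hB.prod hC).sub (Submodule.convex _)

theorem mk_zero_mem_recCone_fdom_qpF_sub {k : H₁} (hk : k ∈ recCone B) :
    (k, (0 : H₂)) ∈ recCone (fdom (qpF B C) - fdom (qpG Q q A)) := by
  rw [fdom_qpF]
  exact recCone_subset_recCone_sub _ _ (prod_mem_recCone hk (zero_mem_recCone C))

theorem zero_mk_mem_recCone_fdom_qpF_sub {k : H₂} (hk : k ∈ recCone C) :
    ((0 : H₁), k) ∈ recCone (fdom (qpF B C) - fdom (qpG Q q A)) := by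
  rw [fdom_qpF]
  exact recCone_subset_recCone_sub _ _ (prod_mem_recCone (zero_mem_recCone B) hk)

theorem mem_recCone_fdom_qpF_sub_of_snd_eq {z : H₁ × H₂} (hz : z.2 = A z.1) :
    z ∈ recCone (fdom (qpF B C) - fdom (qpG Q q A)) := by
  rw [fdom_qpG]
  exact Submodule.coe_subset_recCone_sub _ _ ((LinearMap.mem_graph_iff _ _).2 hz)

theorem mk_zero_mem_recCone_fdom_pConj_add {y : H₁} (hy : y ∈ barrierCone B) :
    (y, (0 : H₂)) ∈ recCone (fdom (pConj (qpF B C)) + fdom (pConj (qpG Q q A))) := by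
  obtain ⟨M, hM⟩ := hy
  refine recCone_subset_recCone_add_left _ _ (mem_recCone_fdom_pConj (M := M) fun p hp => ?_)
  rw [fdom_qpF] at hp
  simpa using hM p.1 hp.1

theorem zero_mk_mem_recCone_fdom_pConj_add {y : H₂} (hy : y ∈ barrierCone C) :
    ((0 : H₁), y) ∈ recCone (fdom (pConj (qpF B C)) + fdom (pConj (qpG Q q A))) := by
  obtain ⟨M, hM⟩ := hy
  refine recCone_subset_recCone_add_left _ _ (mem_recCone_fdom_pConj (M := M) fun p hp => ?_)
  rw [fdom_qpF] at hp
  simpa using hM p.2 hp.2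

theorem neg_adjoint_mk_mem_recCone_fdom_pConj_add [CompleteSpace H₁] [CompleteSpace H₂]
    (μ : H₂) :
    (-(ContinuousLinearMap.adjoint A μ), μ) ∈
      recCone (fdom (pConj (qpF B C)) + fdom (pConj (qpG Q q A))) := by
  refine recCone_subset_recCone_add_right _ _ (mem_recCone_fdom_pConj (M := 0) fun p hp => ?_)
  rw [fdom_qpG, SetLike.mem_coe, LinearMap.mem_graph_iff] at hp
  rw [inner_neg_right, ContinuousLinearMap.adjoint_inner_right, hp]
  simp

end QuadraticProgram

theorem componentwise_projection_formulas_general {H₁ H₂ : Type*}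
    [NormedAddCommGroup H₁] [InnerProductSpace ℝ H₁] [FiniteDimensional ℝ H₁]
    [NormedAddCommGroup H₂] [InnerProductSpace ℝ H₂] [FiniteDimensional ℝ H₂]
    (Q : H₁ →L[ℝ] H₁)
    (q : H₁) (A : H₁ →L[ℝ] H₂)
    (B : Set H₁) (hBcl : IsClosed B) (hBcv : Convex ℝ B)
    (C : Set H₂) (hCcl : IsClosed C) (hCcv : Convex ℝ C)
    (vP : H₁ × H₂) (hvP : IsMinNormPointP (closure (fdom (qpF B C) - fdom (qpG Q q A))) vP)
    (vD : H₁ × H₂)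
    (hvD : IsMinNormPointP (closure (fdom (pConj (qpF B C)) + fdom (pConj (qpG Q q A)))) vD)
    : IsProjOn (recCone B) (-(vP.1 + vD.1)) (-vD.1) ∧
      IsProjOn (recCone C) (-(vP.2 + vD.2)) (-vD.2) ∧
      IsProjOn (polarCone (recCone B)) (-(vP.1 + vD.1)) (-vP.1) ∧
      IsProjOn (polarCone (recCone C)) (-(vP.2 + vD.2)) (-vP.2) := by
  have hP : ∀ d ∈ recCone (fdom (qpF B C) - fdom (qpG Q q A)),
      0 ≤ ⟪vP.1, d.1⟫_ℝ + ⟪vP.2, d.2⟫_ℝ := fun _ =>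
    hvP.inner_nonneg_of_mem_recCone (convex_fdom_qpF_sub_fdom_qpG hBcv hCcv)
  have hD : ∀ d ∈ recCone (fdom (pConj (qpF B C)) + fdom (pConj (qpG Q q A))),
      0 ≤ ⟪vD.1, d.1⟫_ℝ + ⟪vD.2, d.2⟫_ℝ := fun _ =>
    hvD.inner_nonneg_of_mem_recCone
      ((convex_fdom_pConj (qpF B C)).add (convex_fdom_pConj (qpG Q q A)))
  have hrecB : -vD.1 ∈ recCone B :=
    polarCone_barrierCone_subset_recCone hBcl hBcv fun y hy => by
      simpa [real_inner_comm] using hD _ (mk_zero_mem_recCone_fdom_pConj_add hy)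
  have hrecC : -vD.2 ∈ recCone C :=
    polarCone_barrierCone_subset_recCone hCcl hCcv fun y hy => by
      simpa [real_inner_comm] using hD _ (zero_mk_mem_recCone_fdom_pConj_add hy)
  have hpolB : -vP.1 ∈ polarCone (recCone B) := fun k hk => by
    simpa [real_inner_comm] using hP _ (mk_zero_mem_recCone_fdom_qpF_sub hk)
  have hpolC : -vP.2 ∈ polarCone (recCone C) := fun k hk => by
    simpa [real_inner_comm] using hP _ (zero_mk_mem_recCone_fdom_qpF_sub hk)
  have hvD₂ : vD.2 = A vD.1 := eq_apply_of_forall_inner_adjoint_nonneg fun μ =>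
    hD _ (neg_adjoint_mk_mem_recCone_fdom_pConj_add μ)
  -- `vD` lies on the graph of `A`, a recession direction of the primal set.
  have horth : 0 ≤ ⟪vP.1, vD.1⟫_ℝ + ⟪vP.2, vD.2⟫_ℝ :=
    hP vD (mem_recCone_fdom_qpF_sub_of_snd_eq hvD₂)
  have hB : ⟪vP.1, vD.1⟫_ℝ ≤ 0 := by simpa [real_inner_comm] using hpolB _ hrecB
  have hC : ⟪vP.2, vD.2⟫_ℝ ≤ 0 := by simpa [real_inner_comm] using hpolC _ hrecC
  rw [neg_add_rev, neg_add_rev]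
  obtain ⟨hB₁, hB₂⟩ := isProjOn_add_of_mem_polarCone hrecB hpolB (by
    rw [inner_neg_neg, real_inner_comm]; linarith)
  obtain ⟨hC₁, hC₂⟩ := isProjOn_add_of_mem_polarCone hrecC hpolC (by
    rw [inner_neg_neg, real_inner_comm]; linarith)
  exact ⟨hB₁, hC₁, hB₂, hC₂⟩

theorem componentwise_projection_formulas {H₁ H₂ : Type*}
    [NormedAddCommGroup H₁] [InnerProductSpace ℝ H₁] [FiniteDimensional ℝ H₁]
    [NormedAddCommGroup H₂] [InnerProductSpace ℝ H₂] [FiniteDimensional ℝ H₂]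
    (Q : H₁ →L[ℝ] H₁) (hQsa : IsSelfAdjoint Q) (hQpos : ∀ z : H₁, 0 ≤ ⟪Q z, z⟫_ℝ)
    (q : H₁) (A : H₁ →L[ℝ] H₂)
    (B : Set H₁) (hBne : B.Nonempty) (hBcl : IsClosed B) (hBcv : Convex ℝ B)
    (C : Set H₂) (hCne : C.Nonempty) (hCcl : IsClosed C) (hCcv : Convex ℝ C)
    (vP : H₁ × H₂) (hvP : IsMinNormPointP (closure (fdom (qpF B C) - fdom (qpG Q q A))) vP)
    (vD : H₁ × H₂)
    (hvD : IsMinNormPointP (closure (fdom (pConj (qpF B C)) + fdom (pConj (qpG Q q A)))) vD)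
    : IsProjOn (recCone B) (-(vP.1 + vD.1)) (-vD.1) ∧
      IsProjOn (recCone C) (-(vP.2 + vD.2)) (-vD.2) ∧
      IsProjOn (polarCone (recCone B)) (-(vP.1 + vD.1)) (-vP.1) ∧
      IsProjOn (polarCone (recCone C)) (-(vP.2 + vD.2)) (-vP.2) :=
  componentwise_projection_formulas_general Q q A B hBcl hBcv C hCcl hCcv vP hvP vD hvD

end
end

section
/- Writing v_D = (v_D', v_D'') with v_D' ∈ H₁ and v_D'' ∈ H₂, the following hold: Q v_D' = 0, A v_D' = v_D'', and ⟨q, -v_D'⟩ = -‖v_D‖², where ‖v_D‖² = ‖v_D'‖² + ‖v_D''‖². -/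
open scoped InnerProductSpace Pointwise Classical
open Filter Topology

noncomputable section

variable {H₁ H₂ : Type*} [NormedAddCommGroup H₁] [InnerProductSpace ℝ H₁]
  [NormedAddCommGroup H₂] [InnerProductSpace ℝ H₂]

/-!
`dom f*` is the barrier cone `K` of `B × C`, a convex cone containing `0`, and `dom g*` is the
affine subspace `(q, 0) + W` with `W = {d | d₁ + A* d₂ ∈ range Q}`, because the concave quadratic
`z ↦ ⟪z, r⟫ - ½⟪z, Q z⟫` is bounded above iff `r ∈ range Q`. So `S = cl (K + (q, 0) + W)` is convex
and stable under translation by `K` and by `W`, and its least-norm point `v` satisfies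
`‖v‖² ≤ ⟪v, w⟫` for `w ∈ S`. This forces `v ⊥ W`, i.e. `Q v₁ = 0` and `A v₁ = v₂`, and
`⟪v, K⟫ ≥ 0`. Taking `w = (q, 0)` gives `‖v‖² ≤ ⟪v₁, q⟫`; conversely `⟪v, ·⟫ ≥ ⟪v₁, q⟫` on
`K + (q, 0) + W`, hence on its closure, in particular at `v`.
-/

theorem EReal.iSup_ne_top_iff {ι : Sort*} (f : ι → EReal) :
    (⨆ i, f i) ≠ ⊤ ↔ ∃ M : ℝ, ∀ i, f i ≤ M :=
  ⟨fun h => ⟨(⨆ i, f i).toReal, fun i => (le_iSup f i).trans (EReal.le_coe_toReal h)⟩,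
    fun ⟨M, hM⟩ => ne_top_of_le_ne_top (EReal.coe_ne_top M) (iSup_le hM)⟩

section MinNorm

variable {E : Type*} [NormedAddCommGroup E] [InnerProductSpace ℝ E]

theorem sq_norm_le_real_inner_of_isMinOn {K : Set E} (hK : Convex ℝ K) {v w : E} (hv : v ∈ K)
    (hmin : IsMinOn (‖·‖) K v) (hw : w ∈ K) : ‖v‖ ^ 2 ≤ ⟪v, w⟫_ℝ := by
  have : Nonempty K := ⟨⟨v, hv⟩⟩
  have hinf : ‖0 - v‖ = ⨅ x : K, ‖0 - (x : E)‖ := by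
    simp only [zero_sub, norm_neg]
    exact le_antisymm (le_ciInf fun x => hmin x.2)
      (ciInf_le (f := fun x : K => ‖(x : E)‖) ⟨0, by rintro _ ⟨x, rfl⟩; positivity⟩ ⟨v, hv⟩)
  have := (norm_eq_iInf_iff_real_inner_le_zero hK hv).1 hinf w hw
  rw [zero_sub, inner_neg_left, inner_sub_right, real_inner_self_eq_norm_sq] at this
  linarith

end MinNorm

section Translation

variable {E : Type*} [AddCommGroup E] [TopologicalSpace E] [ContinuousAdd E] {s t : Set E}
  {d x : E}

theorem add_mem_closure_of_forall_add_mem (hd : ∀ u ∈ s, u + d ∈ s) (hx : x ∈ closure s) :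
    x + d ∈ closure s :=
  map_mem_closure (f := (· + d)) (continuous_add_const d) hx hd

theorem add_mem_closure_add_of_forall_add_mem_left (hd : ∀ a ∈ s, a + d ∈ s)
    (hx : x ∈ closure (s + t)) : x + d ∈ closure (s + t) := by
  refine add_mem_closure_of_forall_add_mem ?_ hx
  rintro _ ⟨a, ha, u, hu, rfl⟩
  exact ⟨a + d, hd a ha, u, hu, add_right_comm a d u⟩

theorem add_mem_closure_add_of_forall_add_mem_right (hd : ∀ u ∈ t, u + d ∈ t)
    (hx : x ∈ closure (s + t)) : x + d ∈ closure (s + t) := by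
  refine add_mem_closure_of_forall_add_mem ?_ hx
  rintro _ ⟨a, ha, u, hu, rfl⟩
  exact ⟨a, ha, u + d, hd u hu, (add_assoc a u d).symm⟩

theorem add_mem_closure_add_of_mem_direction [Module ℝ E] {P : AffineSubspace ℝ E}
    (hd : d ∈ P.direction) (hx : x ∈ closure (s + (P : Set E))) :
    x + d ∈ closure (s + (P : Set E)) :=
  add_mem_closure_add_of_forall_add_mem_right
    (fun u hu => by rw [add_comm]; exact P.vadd_mem_of_mem_direction hd hu) hx

end Translation

theorem le_inner_of_mem_closure {T : Set (H₁ × H₂)} {c : ℝ} {v w : H₁ × H₂} (hw : w ∈ closure T)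
    (h : ∀ x ∈ T, c ≤ ⟪v.1, x.1⟫_ℝ + ⟪v.2, x.2⟫_ℝ) : c ≤ ⟪v.1, w.1⟫_ℝ + ⟪v.2, w.2⟫_ℝ :=
  ContinuousWithinAt.closure_le (f := fun _ => c)
    (g := fun x : H₁ × H₂ => ⟪v.1, x.1⟫_ℝ + ⟪v.2, x.2⟫_ℝ) hw continuousWithinAt_const
    (by fun_prop) h

namespace IsMinNormPointP

variable {S : Set (H₁ × H₂)} {v : H₁ × H₂}

theorem sq_norm_le_inner (hS : Convex ℝ S) (hv : IsMinNormPointP S v) {w : H₁ × H₂}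
    (hw : w ∈ S) : ‖v.1‖ ^ 2 + ‖v.2‖ ^ 2 ≤ ⟪v.1, w.1⟫_ℝ + ⟪v.2, w.2⟫_ℝ := by
  have hK : Convex ℝ (WithLp.toLp 2 '' S) :=
    hS.linear_image (WithLp.linearEquiv 2 ℝ (H₁ × H₂)).symm.toLinearMap
  have hmin : IsMinOn (‖·‖) (WithLp.toLp 2 '' S) (WithLp.toLp 2 v) := by
    rintro _ ⟨x, hx, rfl⟩
    rw [Set.mem_ofPred_eq, ← sq_le_sq₀ (norm_nonneg _) (norm_nonneg _),
      WithLp.prod_norm_sq_eq_of_L2, WithLp.prod_norm_sq_eq_of_L2]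
    exact hv.2 x hx
  simpa [WithLp.prod_norm_sq_eq_of_L2] using
    sq_norm_le_real_inner_of_isMinOn hK ⟨v, hv.1, rfl⟩ hmin ⟨w, hw, rfl⟩

theorem inner_nonneg_of_add_mem (hS : Convex ℝ S) (hv : IsMinNormPointP S v) {d : H₁ × H₂}
    (hd : v + d ∈ S) : 0 ≤ ⟪v.1, d.1⟫_ℝ + ⟪v.2, d.2⟫_ℝ := by
  have := hv.sq_norm_le_inner hS hd
  simp only [Prod.fst_add, Prod.snd_add, inner_add_right, real_inner_self_eq_norm_sq] at this
  linarith

theorem inner_eq_zero_of_add_mem (hS : Convex ℝ S) (hv : IsMinNormPointP S v)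
    {W : Submodule ℝ (H₁ × H₂)} (hW : ∀ d ∈ W, v + d ∈ S) {d : H₁ × H₂} (hd : d ∈ W) :
    ⟪v.1, d.1⟫_ℝ + ⟪v.2, d.2⟫_ℝ = 0 := by
  have h₁ := hv.inner_nonneg_of_add_mem hS (hW d hd)
  have h₂ := hv.inner_nonneg_of_add_mem hS (hW (-d) (W.neg_mem hd))
  simp only [Prod.fst_neg, Prod.snd_neg, inner_neg_right] at h₂
  linarith

end IsMinNormPointP

theorem mem_fdom_pConj_coe_add_indE_iff (φ : H₁ × H₂ → ℝ) (D : Set (H₁ × H₂)) (u : H₁ × H₂) :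
    u ∈ fdom (pConj fun p => (φ p : EReal) + indE D p) ↔
      ∃ M : ℝ, ∀ p ∈ D, ⟪p.1, u.1⟫_ℝ + ⟪p.2, u.2⟫_ℝ - φ p ≤ M := by
  have hterm : ∀ p, ((⟪p.1, u.1⟫_ℝ + ⟪p.2, u.2⟫_ℝ : ℝ) : EReal) - (φ p + indE D p) =
      if p ∈ D then ((⟪p.1, u.1⟫_ℝ + ⟪p.2, u.2⟫_ℝ - φ p : ℝ) : EReal) else ⊥ := by
    intro p
    by_cases hp : p ∈ D
    · simp [indE, hp, EReal.coe_sub]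
    · simp [indE, hp]
  simp only [fdom, Set.mem_ofPred_eq, pConj, hterm, EReal.iSup_ne_top_iff]
  refine exists_congr fun M => ⟨fun hM p hp => ?_, fun hM p => ?_⟩
  · have := hM p
    rw [if_pos hp] at this
    exact_mod_cast this
  · split_ifs with hp
    · exact_mod_cast hM p hp
    · exact bot_le

section Barrier

variable (B : Set H₁) (C : Set H₂)

theorem mem_fdom_pConj_qpF_iff (a : H₁ × H₂) :
    a ∈ fdom (pConj (qpF B C)) ↔ ∃ M : ℝ, ∀ p ∈ B ×ˢ C, ⟪p.1, a.1⟫_ℝ + ⟪p.2, a.2⟫_ℝ ≤ M := by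
  have hF : qpF B C = fun p => ((0 : ℝ) : EReal) + indE (B ×ˢ C) p := by
    ext p
    by_cases h₁ : p.1 ∈ B <;> by_cases h₂ : p.2 ∈ C <;> simp [qpF, indE, h₁, h₂]
  rw [hF, mem_fdom_pConj_coe_add_indE_iff]
  simp

theorem zero_mem_fdom_pConj_qpF : (0 : H₁ × H₂) ∈ fdom (pConj (qpF B C)) :=
  (mem_fdom_pConj_qpF_iff B C 0).2 ⟨0, fun p _ => by simp⟩

variable {B C} {a a' : H₁ × H₂}

theorem add_mem_fdom_pConj_qpF (ha : a ∈ fdom (pConj (qpF B C)))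
    (ha' : a' ∈ fdom (pConj (qpF B C))) : a + a' ∈ fdom (pConj (qpF B C)) := by
  rw [mem_fdom_pConj_qpF_iff] at ha ha' ⊢
  obtain ⟨M, hM⟩ := ha
  obtain ⟨M', hM'⟩ := ha'
  refine ⟨M + M', fun p hp => ?_⟩
  have := hM p hp
  have := hM' p hp
  simp only [Prod.fst_add, Prod.snd_add, inner_add_right]
  linarith

theorem smul_mem_fdom_pConj_qpF {c : ℝ} (hc : 0 ≤ c) (ha : a ∈ fdom (pConj (qpF B C))) :
    c • a ∈ fdom (pConj (qpF B C)) := by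
  rw [mem_fdom_pConj_qpF_iff] at ha ⊢
  obtain ⟨M, hM⟩ := ha
  refine ⟨c * M, fun p hp => ?_⟩
  simp only [Prod.smul_fst, Prod.smul_snd, real_inner_smul_right, ← mul_add]
  exact mul_le_mul_of_nonneg_left (hM p hp) hc

variable (B C) in
theorem convex_fdom_pConj_qpF : Convex ℝ (fdom (pConj (qpF B C))) :=
  fun _ ha _ ha' _ _ hθ hσ _ => add_mem_fdom_pConj_qpF (smul_mem_fdom_pConj_qpF hθ ha)
    (smul_mem_fdom_pConj_qpF hσ ha')

end Barrier

theorem exists_forall_inner_sub_half_inner_le_iff {H : Type*} [NormedAddCommGroup H]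
    [InnerProductSpace ℝ H] [FiniteDimensional ℝ H] {Q : H →L[ℝ] H} (hQsa : IsSelfAdjoint Q)
    (hQpos : ∀ z, 0 ≤ ⟪Q z, z⟫_ℝ) (r : H) :
    (∃ M : ℝ, ∀ z, ⟪z, r⟫_ℝ - 1 / 2 * ⟪z, Q z⟫_ℝ ≤ M) ↔ r ∈ Q.range := by
  constructor
  · rintro ⟨M, hM⟩
    rw [← Q.range.orthogonal_orthogonal,
      ContinuousLinearMap.IsStarNormal.orthogonal_range hQsa.isStarNormal]
    intro z (hz : Q z = 0)
    by_contra hzr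
    have := hM (((M + 1) / ⟪z, r⟫_ℝ) • z)
    rw [map_smul, hz, smul_zero, inner_zero_right, real_inner_smul_left,
      div_mul_cancel₀ _ hzr] at this
    linarith
  · rintro ⟨z₀, rfl⟩
    have hsymm : ∀ x y, ⟪Q x, y⟫_ℝ = ⟪x, Q y⟫_ℝ := hQsa.isSymmetric
    rw [ContinuousLinearMap.coe_coe]
    refine ⟨1 / 2 * ⟪z₀, Q z₀⟫_ℝ, fun z => ?_⟩
    have := hQpos (z - z₀)
    rw [map_sub, inner_sub_left, inner_sub_right, inner_sub_right] at this
    linarith [hsymm z z₀, real_inner_comm z (Q z₀), real_inner_comm z (Q z),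
      real_inner_comm z₀ (Q z₀)]

open scoped InnerProduct

section Direction

variable [CompleteSpace H₁] [CompleteSpace H₂] (Q : H₁ →L[ℝ] H₁) (A : H₁ →L[ℝ] H₂)

def qpGConjDomDirection : Submodule ℝ (H₁ × H₂) :=
  Q.range.comap (LinearMap.fst ℝ H₁ H₂ + (A† : H₂ →ₗ[ℝ] H₁) ∘ₗ LinearMap.snd ℝ H₁ H₂)

theorem mem_qpGConjDomDirection_iff {d : H₁ × H₂} :
    d ∈ qpGConjDomDirection Q A ↔ d.1 + (A†) d.2 ∈ Q.range :=
  Iff.rfl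

variable {Q} in
theorem forall_inner_qpGConjDomDirection_eq_zero_iff (hQsa : IsSelfAdjoint Q) {v : H₁ × H₂} :
    (∀ d ∈ qpGConjDomDirection Q A, ⟪v.1, d.1⟫_ℝ + ⟪v.2, d.2⟫_ℝ = 0) ↔
      Q v.1 = 0 ∧ A v.1 = v.2 := by
  have hsymm : ∀ x y, ⟪Q x, y⟫_ℝ = ⟪x, Q y⟫_ℝ := hQsa.isSymmetric
  constructor
  · intro h
    have hQ : ∀ z, ⟪Q v.1, z⟫_ℝ = 0 := fun z => by
      simpa [hsymm] using h (Q z, 0) ((mem_qpGConjDomDirection_iff Q A).2 (by simp))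
    have hA : ∀ μ, ⟪v.2 - A v.1, μ⟫_ℝ = 0 := fun μ => by
      have := h (-(A†) μ, μ) ((mem_qpGConjDomDirection_iff Q A).2 (by simp))
      rwa [inner_neg_right, ContinuousLinearMap.adjoint_inner_right, neg_add_eq_sub,
        ← inner_sub_left] at this
    exact ⟨inner_self_eq_zero.1 (hQ _), (sub_eq_zero.1 (inner_self_eq_zero.1 (hA _))).symm⟩
  · rintro ⟨hQ, hA⟩ d hd
    obtain ⟨z, hz : Q z = d.1 + (A†) d.2⟩ := (mem_qpGConjDomDirection_iff Q A).1 hd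
    rw [eq_sub_of_add_eq hz.symm, inner_sub_right, ← hsymm, hQ,
      ContinuousLinearMap.adjoint_inner_right, hA]
    simp

end Direction

theorem fdom_pConj_qpG_eq [FiniteDimensional ℝ H₁] [CompleteSpace H₂] {Q : H₁ →L[ℝ] H₁}
    (hQsa : IsSelfAdjoint Q) (hQpos : ∀ z : H₁, 0 ≤ ⟪Q z, z⟫_ℝ) (q : H₁) (A : H₁ →L[ℝ] H₂) :
    fdom (pConj (qpG Q q A)) =
      AffineSubspace.mk' ((q, 0) : H₁ × H₂) (qpGConjDomDirection Q A) := by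
  ext u
  have hobj : ∀ z, ⟪z, u.1⟫_ℝ + ⟪A z, u.2⟫_ℝ - (1 / 2 * ⟪z, Q z⟫_ℝ + ⟪q, z⟫_ℝ) =
      ⟪z, (u -ᵥ (q, 0)).1 + (A†) (u -ᵥ (q, 0)).2⟫_ℝ - 1 / 2 * ⟪z, Q z⟫_ℝ := fun z => by
    simp only [vsub_eq_sub, Prod.fst_sub, Prod.snd_sub, sub_zero, inner_add_right,
      inner_sub_right, ContinuousLinearMap.adjoint_inner_right, real_inner_comm q]
    ring
  rw [SetLike.mem_coe, AffineSubspace.mem_mk', mem_qpGConjDomDirection_iff,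
    ← exists_forall_inner_sub_half_inner_le_iff hQsa hQpos]
  refine (mem_fdom_pConj_coe_add_indE_iff _ _ u).trans <|
    exists_congr fun M => ⟨fun h z => hobj z ▸ h (z, A z) rfl, ?_⟩
  rintro h ⟨z, _⟩ (rfl : A z = _)
  exact hobj z ▸ h z

theorem vD_certificate_properties_general {H₁ H₂ : Type*}
    [NormedAddCommGroup H₁] [InnerProductSpace ℝ H₁] [FiniteDimensional ℝ H₁]
    [NormedAddCommGroup H₂] [InnerProductSpace ℝ H₂] [FiniteDimensional ℝ H₂]
    (Q : H₁ →L[ℝ] H₁) (hQsa : IsSelfAdjoint Q) (hQpos : ∀ z : H₁, 0 ≤ ⟪Q z, z⟫_ℝ)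
    (q : H₁) (A : H₁ →L[ℝ] H₂)
    (B : Set H₁)
    (C : Set H₂)
    (vD : H₁ × H₂)
    (hvD : IsMinNormPointP (closure (fdom (pConj (qpF B C)) + fdom (pConj (qpG Q q A)))) vD)
    : Q vD.1 = 0 ∧ A vD.1 = vD.2 ∧ ⟪q, -vD.1⟫_ℝ = -(‖vD.1‖ ^ 2 + ‖vD.2‖ ^ 2) := by
  rw [fdom_pConj_qpG_eq hQsa hQpos q A] at hvD
  set F := fdom (pConj (qpF B C))
  set P := AffineSubspace.mk' ((q, 0) : H₁ × H₂) (qpGConjDomDirection Q A)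
  have hS : Convex ℝ (closure (F + (P : Set (H₁ × H₂)))) :=
    ((convex_fdom_pConj_qpF B C).add P.convex).closure
  have hperp : Q vD.1 = 0 ∧ A vD.1 = vD.2 := by
    refine (forall_inner_qpGConjDomDirection_eq_zero_iff A hQsa).1 fun d hd => ?_
    refine hvD.inner_eq_zero_of_add_mem hS (W := P.direction)
      (fun e he => add_mem_closure_add_of_mem_direction he hvD.1) ?_
    rwa [AffineSubspace.direction_mk']
  have hle : ‖vD.1‖ ^ 2 + ‖vD.2‖ ^ 2 ≤ ⟪vD.1, q⟫_ℝ := by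
    simpa using hvD.sq_norm_le_inner hS <| subset_closure
      ⟨0, zero_mem_fdom_pConj_qpF B C, (q, 0), AffineSubspace.self_mem_mk' _ _, zero_add _⟩
  have hge : ⟪vD.1, q⟫_ℝ ≤ ⟪vD.1, vD.1⟫_ℝ + ⟪vD.2, vD.2⟫_ℝ := by
    refine le_inner_of_mem_closure hvD.1 ?_
    rintro _ ⟨a, ha, u, hu, rfl⟩
    have hva := hvD.inner_nonneg_of_add_mem hS <|
      add_mem_closure_add_of_forall_add_mem_left (fun b hb => add_mem_fdom_pConj_qpF hb ha) hvD.1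
    have hvu := (forall_inner_qpGConjDomDirection_eq_zero_iff A hQsa).2 hperp _
      (AffineSubspace.mem_mk'.1 hu)
    simp only [vsub_eq_sub, Prod.fst_add, Prod.snd_add, Prod.fst_sub, Prod.snd_sub,
      inner_add_right, inner_sub_right, inner_zero_right] at hva hvu ⊢
    linarith
  rw [real_inner_self_eq_norm_sq, real_inner_self_eq_norm_sq] at hge
  rw [inner_neg_right, real_inner_comm, le_antisymm hle hge]
  exact ⟨hperp.1, hperp.2, rfl⟩

theorem vD_certificate_properties {H₁ H₂ : Type*}
    [NormedAddCommGroup H₁] [InnerProductSpace ℝ H₁] [FiniteDimensional ℝ H₁]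
    [NormedAddCommGroup H₂] [InnerProductSpace ℝ H₂] [FiniteDimensional ℝ H₂]
    (Q : H₁ →L[ℝ] H₁) (hQsa : IsSelfAdjoint Q) (hQpos : ∀ z : H₁, 0 ≤ ⟪Q z, z⟫_ℝ)
    (q : H₁) (A : H₁ →L[ℝ] H₂)
    (B : Set H₁) (hBne : B.Nonempty) (hBcl : IsClosed B) (hBcv : Convex ℝ B)
    (C : Set H₂) (hCne : C.Nonempty) (hCcl : IsClosed C) (hCcv : Convex ℝ C)
    (vD : H₁ × H₂)
    (hvD : IsMinNormPointP (closure (fdom (pConj (qpF B C)) + fdom (pConj (qpG Q q A)))) vD)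
    : Q vD.1 = 0 ∧ A vD.1 = vD.2 ∧ ⟪q, -vD.1⟫_ℝ = -(‖vD.1‖ ^ 2 + ‖vD.2‖ ^ 2) :=
  vD_certificate_properties_general Q hQsa hQpos q A B C vD hvD

end
end
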